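/- Define w₁₄(x) = (x − i√(1−x²))/(x + i√(1−x²)) for x ∈ D₁ = ℂ \ ((−∞,−1] ∪ [1,∞)), using the principal square root. Then w₁₄ is a conformal map from D₁ onto ℂ \ [0, ∞). -/

import Mathlib

/-- The doubly slit plane `ℂ \ ((−∞,−1] ∪ [1,∞))`. -/
def domD1 : Set ℂ := {z : ℂ | z.im = 0 ∧ (z.re ≤ -1 ∨ 1 ≤ z.re)}ᶜ

/-- Principal square root of `1 - x²`. -/
noncomputable def sqrt1mx2 (x : ℂ) : ℂ := (1 - x ^ 2) ^ ((1 : ℂ) / 2)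

/-- The map `w₁₄`. -/
noncomputable def w14 (x : ℂ) : ℂ :=
  (x - Complex.I * sqrt1mx2 x) / (x + Complex.I * sqrt1mx2 x)

/-!
With `s = √(1 - x²)`, the numbers `v = s + i x` and `s - i x` are mutually inverse, and
`w₁₄(x) = -v²`. On `D₁` the point `1 - x²` lies in the slit plane, so `Re s > 0`; since `v` and
`v⁻¹` have real parts of the same sign summing to `2 Re s`, `v` lies in the right half-plane.
Conversely every `v` with `Re v > 0` arises from `x = i (v⁻¹ - v)/2 ∈ D₁`, because
`s = (v + v⁻¹)/2` is then the square root of `1 - x²` with positive real part. Hence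
`x ↦ v` is a bijection of `D₁` onto the right half-plane, squaring is a bijection of the
right half-plane onto the slit plane, and negation carries the slit plane onto `ℂ \ [0, ∞)`.
-/

open Complex

namespace Complex

lemma cpow_one_div_two_sq (z : ℂ) : (z ^ ((1 : ℂ) / 2)) ^ 2 = z := by
  simpa only [one_div, Nat.cast_ofNat] using cpow_nat_inv_pow z two_ne_zero

lemma re_cpow_one_div_two_pos {z : ℂ} (hz : z ∈ slitPlane) : 0 < (z ^ ((1 : ℂ) / 2)).re := by
  rw [one_div, cpow_inv_two_re, Real.sqrt_pos]
  rcases mem_slitPlane_iff.1 hz with hre | him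
  · linarith [norm_nonneg z]
  · linarith [abs_re_lt_norm.2 him, neg_abs_le z.re]

lemma sq_mem_slitPlane_of_re_pos {z : ℂ} (hz : 0 < z.re) : z ^ 2 ∈ slitPlane := by
  rw [mem_slitPlane_iff]
  by_cases him : z.im = 0
  · left
    simp only [sq, mul_re, him, mul_zero, sub_zero]
    positivity
  · right
    simp only [sq, mul_im]
    exact fun h => him (by nlinarith)

lemma eq_of_sq_eq_of_re_pos {a b : ℂ} (h : a ^ 2 = b ^ 2) (ha : 0 < a.re) (hb : 0 < b.re) :
    a = b := by
  rcases sq_eq_sq_iff_eq_or_eq_neg.1 h with h | rfl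
  · exact h
  · rw [neg_re] at ha
    linarith

lemma re_inv_pos {z : ℂ} (hz : 0 < z.re) : 0 < z⁻¹.re := by
  rw [inv_re]
  exact div_pos hz (normSq_pos.2 (ne_zero_of_re_pos hz))

lemma re_pos_of_mul_eq_one {a b : ℂ} (hab : a * b = 1) (hsum : 0 < (a + b).re) : 0 < a.re := by
  rw [eq_inv_of_mul_eq_one_right hab, add_re, inv_re] at hsum
  by_contra! ha
  have : a.re / normSq a ≤ 0 := div_nonpos_of_nonpos_of_nonneg ha (normSq_nonneg a)
  linarith

lemma bijOn_sq_re_pos_slitPlane : Set.BijOn (· ^ 2) {z : ℂ | 0 < z.re} slitPlane :=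
  ⟨fun _ hz => sq_mem_slitPlane_of_re_pos hz,
    fun _ ha _ hb h => eq_of_sq_eq_of_re_pos h ha hb,
    fun z hz => ⟨z ^ ((1 : ℂ) / 2), re_cpow_one_div_two_pos hz, cpow_one_div_two_sq z⟩⟩

lemma neg_mem_slitPlane_iff {w : ℂ} : -w ∈ slitPlane ↔ ¬(w.im = 0 ∧ 0 ≤ w.re) := by
  rw [mem_slitPlane_iff, neg_re, neg_im, neg_ne_zero, neg_pos, not_and_or, not_le, or_comm]

lemma bijOn_neg_slitPlane : Set.BijOn Neg.neg slitPlane {w : ℂ | w.im = 0 ∧ 0 ≤ w.re}ᶜ :=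
  ⟨fun z hz => neg_mem_slitPlane_iff.1 (by rwa [neg_neg]),
    neg_injective.injOn,
    fun w hw => ⟨-w, neg_mem_slitPlane_iff.2 hw, neg_neg w⟩⟩

end Complex

lemma mem_domD1_iff {x : ℂ} : x ∈ domD1 ↔ 1 - x ^ 2 ∈ slitPlane := by
  simp only [domD1, Set.mem_compl_iff, Set.mem_ofPred_eq, mem_slitPlane_iff, sq, sub_re,
    sub_im, mul_re, mul_im, one_re, one_im]
  constructor
  · intro hx
    push Not at hx
    by_cases him : x.im = 0
    · obtain ⟨hlo, hhi⟩ := hx him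
      left
      rw [him]
      nlinarith
    · by_cases hre : x.re = 0
      · left
        rw [hre]
        nlinarith [sq_pos_of_ne_zero him]
      · right
        intro h
        exact mul_ne_zero hre him (by linarith)
  · rintro h ⟨him, hre⟩
    rw [him] at h
    rcases h with h | h
    · rcases hre with hre | hre <;> nlinarith
    · simp at h

lemma sqrt1mx2_sq (x : ℂ) : sqrt1mx2 x ^ 2 = 1 - x ^ 2 :=
  cpow_one_div_two_sq _

lemma re_sqrt1mx2_pos {x : ℂ} (hx : x ∈ domD1) : 0 < (sqrt1mx2 x).re :=
  re_cpow_one_div_two_pos (mem_domD1_iff.1 hx)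

lemma differentiableAt_sqrt1mx2 {x : ℂ} (hx : x ∈ domD1) : DifferentiableAt ℂ sqrt1mx2 x :=
  ((differentiableAt_const 1).sub (differentiableAt_id.pow 2)).cpow_const (mem_domD1_iff.1 hx)

noncomputable def sqrtNegW14 (x : ℂ) : ℂ := sqrt1mx2 x + I * x

lemma sqrtNegW14_mul (x : ℂ) : sqrtNegW14 x * (sqrt1mx2 x - I * x) = 1 := by
  rw [sqrtNegW14]
  linear_combination sqrt1mx2_sq x - x ^ 2 * I_sq

lemma w14_eq_neg_sq : w14 = fun x => -sqrtNegW14 x ^ 2 := by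
  funext x
  have hden : x + I * sqrt1mx2 x = I * (sqrt1mx2 x - I * x) := by
    linear_combination x * I_sq
  have hmul := sqrtNegW14_mul x
  rw [w14, hden, div_eq_iff (mul_ne_zero I_ne_zero (right_ne_zero_of_mul_eq_one hmul))]
  rw [sqrtNegW14] at hmul ⊢
  linear_combination (I * (sqrt1mx2 x + I * x)) * hmul + x * I_sq

lemma re_sqrtNegW14_pos {x : ℂ} (hx : x ∈ domD1) : 0 < (sqrtNegW14 x).re := by
  refine re_pos_of_mul_eq_one (sqrtNegW14_mul x) ?_
  have hsum : sqrtNegW14 x + (sqrt1mx2 x - I * x) = sqrt1mx2 x + sqrt1mx2 x := by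
    rw [sqrtNegW14]; ring
  rw [hsum, add_re]
  linarith [re_sqrt1mx2_pos hx]

lemma exists_sqrtNegW14_eq {v : ℂ} (hv : 0 < v.re) : ∃ x ∈ domD1, sqrtNegW14 x = v := by
  set x := I * (v⁻¹ - v) / 2
  have hsq : ((v + v⁻¹) / 2) ^ 2 = 1 - x ^ 2 := by
    linear_combination mul_inv_cancel₀ (ne_zero_of_re_pos hv) + (v⁻¹ - v) ^ 2 / 4 * I_sq
  have hre : 0 < ((v + v⁻¹) / 2).re := by
    rw [div_ofNat_re, add_re]
    linarith [re_inv_pos hv]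
  have hx : x ∈ domD1 := mem_domD1_iff.2 (hsq ▸ sq_mem_slitPlane_of_re_pos hre)
  have hs : sqrt1mx2 x = (v + v⁻¹) / 2 :=
    eq_of_sq_eq_of_re_pos ((sqrt1mx2_sq x).trans hsq.symm) (re_sqrt1mx2_pos hx) hre
  refine ⟨x, hx, ?_⟩
  rw [sqrtNegW14, hs]
  linear_combination (v⁻¹ - v) / 2 * I_sq

lemma bijOn_sqrtNegW14 : Set.BijOn sqrtNegW14 domD1 {v : ℂ | 0 < v.re} := by
  refine ⟨fun x hx => re_sqrtNegW14_pos hx, fun x _ y _ h => ?_,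
    fun v hv => exists_sqrtNegW14_eq hv⟩
  have hinv : sqrt1mx2 x - I * x = sqrt1mx2 y - I * y := by
    rw [eq_inv_of_mul_eq_one_right (sqrtNegW14_mul x),
      eq_inv_of_mul_eq_one_right (sqrtNegW14_mul y), h]
  rw [sqrtNegW14, sqrtNegW14] at h
  have hxy : 2 * I * x = 2 * I * y := by
    linear_combination h - hinv
  exact mul_left_cancel₀ (mul_ne_zero two_ne_zero I_ne_zero) hxy

theorem w14_conformal :
    DifferentiableOn ℂ w14 domD1 ∧
    Set.InjOn w14 domD1 ∧
    w14 '' domD1 = {w : ℂ | w.im = 0 ∧ 0 ≤ w.re}ᶜ := by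
  rw [w14_eq_neg_sq]
  have hbij : Set.BijOn (fun x => -sqrtNegW14 x ^ 2) domD1 {w : ℂ | w.im = 0 ∧ 0 ≤ w.re}ᶜ :=
    bijOn_neg_slitPlane.comp (bijOn_sq_re_pos_slitPlane.comp bijOn_sqrtNegW14)
  have hdiff : DifferentiableOn ℂ sqrtNegW14 domD1 := fun x hx =>
    ((differentiableAt_sqrt1mx2 hx).add (differentiableAt_id.const_mul I)).differentiableWithinAt
  exact ⟨(hdiff.pow 2).neg, hbij.injOn, hbij.image_eq⟩
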